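/- Let G and H be finite simple graphs, neither of which is a complete graph, with n_G and n_H vertices respectively. Then the star b-chromatic number of their join satisfies S_b(G ∨ H) = max{ S_b(G) + n_H, S_b(H) + n_G }. -/

import Mathlib

/-!
Definitions for star colorings, star recoloring steps, the strict partial order `≺ₛ`,
star b-vertices, the star (b-)chromatic number, star degrees and related notions,
following Božović, Mesarič Štesl, Peterin,
"On star b-chromatic number of a graph".
-/

variable {V : Type*}

/-- A proper coloring which is a *star coloring*: no path on four vertices
(vertices `a-b-x-y` with the three edges `ab`, `bx`, `xy`) is bicolored,
i.e. the union of any two color classes induces a star forest. -/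
def IsStarColoring (G : SimpleGraph V) (c : V → ℕ) : Prop :=
  (∀ ⦃u w⦄, G.Adj u w → c u ≠ c w) ∧
  ∀ a b x y : V, G.Adj a b → G.Adj b x → G.Adj x y →
    a ≠ x → b ≠ y → a ≠ y → ¬(c a = c x ∧ c b = c y)

/-- The set of colors used by a coloring. -/
def colorsUsed [Fintype V] (c : V → ℕ) : Finset ℕ :=
  Finset.image c Finset.univ

/-- `c'` is obtained from `c` by a *star recoloring step*: some color class `Vᵢ`
of the star coloring `c` is completely recolored, each of its vertices receiving one
of the remaining colors of `c`, so that the result `c'` is again a star coloring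
(using the colors of `c` minus `i`). We write `c' ⊲ₛ c`. -/
def StarRecolorStep [Fintype V] (G : SimpleGraph V) (c' c : V → ℕ) : Prop :=
  IsStarColoring G c ∧ IsStarColoring G c' ∧
  ∃ i ∈ colorsUsed c,
    (∀ v, c v ≠ i → c' v = c v) ∧
    ∀ v, c v = i → c' v ≠ i ∧ c' v ∈ colorsUsed c

/-- A minimal element of the strict partial order `≺ₛ` (the transitive closure of
the star recoloring step relation `⊲ₛ`): a star coloring on which no star
recoloring step can be performed. -/
def IsStarBColoring [Fintype V] (G : SimpleGraph V) (c : V → ℕ) : Prop :=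
  IsStarColoring G c ∧ ∀ c', ¬ StarRecolorStep G c' c

/-- The *star b-chromatic number* `Sᵦ(G)`: the maximum number of colors used by a
minimal element of `≺ₛ`. -/
noncomputable def starBChromaticNumber [Fintype V] (G : SimpleGraph V) : ℕ :=
  sSup {n | ∃ c : V → ℕ, IsStarBColoring G c ∧ (colorsUsed c).card = n}

/-- The *star chromatic number* `S(G)`: the minimum number of colors in a star coloring. -/
noncomputable def starChromaticNumber [Fintype V] (G : SimpleGraph V) : ℕ :=
  sInf {n | ∃ c : V → ℕ, IsStarColoring G c ∧ (colorsUsed c).card = n}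

/-- A color `j` is *blocked* for the vertex `v` under the star coloring `c`
if `j` is the color of `v` itself, or recoloring `v` alone with `j` destroys
the star coloring property. -/
def ColorBlockedFor [DecidableEq V] (G : SimpleGraph V) (c : V → ℕ) (v : V) (j : ℕ) : Prop :=
  j = c v ∨ ¬ IsStarColoring G (Function.update c v j)

/-- A color of `c` which is not blocked for `v` is *available* for `v`. -/
def ColorAvailableFor [Fintype V] [DecidableEq V] (G : SimpleGraph V) (c : V → ℕ)
    (v : V) (j : ℕ) : Prop :=
  j ∈ colorsUsed c ∧ ¬ ColorBlockedFor G c v j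

/-- `u-b-x-w` is an induced path on four vertices of `G`. -/
def IsInducedP4 (G : SimpleGraph V) (u b x w : V) : Prop :=
  G.Adj u b ∧ G.Adj b x ∧ G.Adj x w ∧
  ¬ G.Adj u x ∧ ¬ G.Adj b w ∧ ¬ G.Adj u w ∧
  u ≠ x ∧ b ≠ w ∧ u ≠ w

/-- The relation `~ᵢ` on a color class: two vertices of the same color joined
by an induced path on four vertices. -/
def P4Rel (G : SimpleGraph V) (c : V → ℕ) (u w : V) : Prop :=
  c u = c w ∧ ∃ b x, IsInducedP4 G u b x w

/-- The `P₄`-system of `v`: its equivalence class under the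
reflexive-transitive closure of `~ᵢ`. -/
def P4System (G : SimpleGraph V) (c : V → ℕ) (v : V) : Set V :=
  {u | Relation.ReflTransGen (P4Rel G c) v u}

/-- An available color `j` for `v` is *blocked for the `P₄`-system of `v`* if every
recoloring of the color class of `v` (each vertex receiving an available color)
in which `v` is recolored by `j` yields a bicolored path on four vertices between
two vertices of the `P₄`-system of `v`. -/
def BlockedForP4System [Fintype V] [DecidableEq V] (G : SimpleGraph V) (c : V → ℕ)
    (v : V) (j : ℕ) : Prop :=
  ∀ c' : V → ℕ,
    (∀ u, c u ≠ c v → c' u = c u) →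
    (∀ u, c u = c v → ColorAvailableFor G c u (c' u)) →
    c' v = j →
    ∃ u w b x, u ∈ P4System G c v ∧ w ∈ P4System G c v ∧
      G.Adj u b ∧ G.Adj b x ∧ G.Adj x w ∧ u ≠ x ∧ b ≠ w ∧ u ≠ w ∧
      c' u = c' x ∧ c' b = c' w

/-- A *star b-vertex*: every available color for `v` is blocked for its `P₄`-system. -/
def IsStarBVertex [Fintype V] [DecidableEq V] (G : SimpleGraph V) (c : V → ℕ) (v : V) : Prop :=
  ∀ j, ColorAvailableFor G c v j → BlockedForP4System G c v j

/-- The *star degree* `dˢ_G(v)` of a vertex: the maximum number of colors blocked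
for `v` over all star colorings of `G`. -/
noncomputable def starDegree [Fintype V] [DecidableEq V] (G : SimpleGraph V) (v : V) : ℕ :=
  sSup {n | ∃ c : V → ℕ, IsStarColoring G c ∧
    {j | j ∈ colorsUsed c ∧ ColorBlockedFor G c v j}.ncard = n}

/-- The `mₛ`-degree of a graph: the largest `k` such that `G` has `k` vertices
of star degree at least `k - 1` (equivalently, with the vertices ordered by
non-increasing star degree, `mₛ(G) = max {i : i - 1 ≤ dˢ_G(vᵢ)}`). -/
noncomputable def msDegree [Fintype V] [DecidableEq V] (G : SimpleGraph V) : ℕ :=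
  sSup {k | ∃ s : Finset V, s.card = k ∧ ∀ v ∈ s, k - 1 ≤ starDegree G v}

/-- The maximum degree `Δ(G)` of a graph. -/
noncomputable def maxDeg (G : SimpleGraph V) : ℕ :=
  sSup {d | ∃ v : V, (G.neighborSet v).ncard = d}

/-- The *b-chromatic number* `φ(G)`: the maximum number of colors of a proper coloring
in which every color class contains a vertex whose closed neighborhood contains
all the colors. -/
noncomputable def bChromaticNumber [Fintype V] (G : SimpleGraph V) : ℕ :=
  sSup {k | ∃ c : V → ℕ, (∀ ⦃u w⦄, G.Adj u w → c u ≠ c w) ∧ (colorsUsed c).card = k ∧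
    ∀ i ∈ colorsUsed c, ∃ v, c v = i ∧
      ∀ j ∈ colorsUsed c, ∃ u, (u = v ∨ G.Adj v u) ∧ c u = j}

/-- The join `G ∨ H` of two simple graphs: disjoint union of `G` and `H`
together with all edges between the two vertex sets. -/
def graphJoin {α β : Type*} (G : SimpleGraph α) (H : SimpleGraph β) :
    SimpleGraph (α ⊕ β) where
  Adj x y :=
    (∃ a b, x = Sum.inl a ∧ y = Sum.inl b ∧ G.Adj a b) ∨
    (∃ a b, x = Sum.inr a ∧ y = Sum.inr b ∧ H.Adj a b) ∨
    (∃ a b, x = Sum.inl a ∧ y = Sum.inr b) ∨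
    (∃ a b, x = Sum.inr a ∧ y = Sum.inl b)
  symm := by
    constructor
    rintro x y (⟨a,b,rfl,rfl,h⟩|⟨a,b,rfl,rfl,h⟩|⟨a,b,rfl,rfl⟩|⟨a,b,rfl,rfl⟩)
    · exact Or.inl ⟨b, a, rfl, rfl, h.symm⟩
    · exact Or.inr (Or.inl ⟨b, a, rfl, rfl, h.symm⟩)
    · exact Or.inr (Or.inr (Or.inr ⟨b, a, rfl, rfl⟩))
    · exact Or.inr (Or.inr (Or.inl ⟨b, a, rfl, rfl⟩))
  loopless := by
    constructor
    rintro x (⟨a,b,h1,h2,h⟩|⟨a,b,h1,h2,h⟩|⟨a,b,h1,h2⟩|⟨a,b,h1,h2⟩) <;> subst h1 <;>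
      simp_all [SimpleGraph.irrefl]

/-- `N₂(v)`: vertices at distance exactly two from `v`. -/
def distTwoSet (G : SimpleGraph V) (v : V) : Set V := {u | G.dist v u = 2}

/-- `N₃(v)`: vertices at distance exactly three from `v`. -/
def distThreeSet (G : SimpleGraph V) (v : V) : Set V := {u | G.dist v u = 3}

/-- `X(v)`: vertices at distance two from `v` with no neighbor at distance three from `v`. -/
def XSet (G : SimpleGraph V) (v : V) : Set V :=
  {u | u ∈ distTwoSet G v ∧ ∀ w ∈ distThreeSet G v, ¬ G.Adj u w}

/-- `Y(v)`: vertices at distance two from `v` having a neighbor at distance three from `v`. -/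
def YSet (G : SimpleGraph V) (v : V) : Set V := distTwoSet G v \ XSet G v

/-!
A coloring of `G ∨ H` is a star coloring exactly when its restrictions to `G` and `H` are star
colorings, the two sides use disjoint sets of colors, and one side is rainbow: a repeated color
on each side would give a bicolored `P₄` alternating between the sides.

If the `H` side of a star b-coloring of `G ∨ H` is rainbow, every recoloring step of its `G` side
lifts to the join, so the `G` side is a star b-coloring of `G` and there are at most
`Sᵦ(G) + n_H` colors. Conversely, an injective star coloring of a non-complete graph can merge the
classes of two nonadjacent vertices, so an optimal star b-coloring of `G` repeats a color.
Extending it by `n_H` fresh colors on `H` gives a star b-coloring of `G ∨ H`: a recolored vertex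
of `H` can take neither a color of `G` (it sees all of `G`) nor another color of `H` (both sides
would then repeat a color).
-/

open Function Sum

section StarColoring

variable {α β : Type*}

lemma mem_colorsUsed [Fintype α] {c : α → ℕ} {n : ℕ} : n ∈ colorsUsed c ↔ ∃ v, c v = n := by
  simp [colorsUsed]

lemma colorsUsed_comp_of_surjective [Fintype α] [Fintype β] {f : α → β} (hf : Surjective f)
    (c : β → ℕ) : colorsUsed (c ∘ f) = colorsUsed c := by
  ext n
  simp only [mem_colorsUsed, comp_apply]
  exact (hf.exists (p := fun b => c b = n)).symm

lemma colorsUsed_comp_subset [Fintype α] [Fintype β] (f : α → β) (c : β → ℕ) :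
    colorsUsed (c ∘ f) ⊆ colorsUsed c := fun _ hn =>
  let ⟨v, hv⟩ := mem_colorsUsed.1 hn
  mem_colorsUsed.2 ⟨f v, hv⟩

lemma card_colorsUsed_le [Fintype α] (c : α → ℕ) : (colorsUsed c).card ≤ Fintype.card α :=
  Finset.card_image_le

lemma card_colorsUsed_of_injective [Fintype α] {c : α → ℕ} (hc : Injective c) :
    (colorsUsed c).card = Fintype.card α :=
  Finset.card_image_of_injective _ hc

lemma isStarColoring_of_injective {G : SimpleGraph α} {c : α → ℕ} (hc : Injective c) :
    IsStarColoring G c :=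
  ⟨fun _ _ h he => G.ne_of_adj h (hc he), fun _ _ _ _ _ _ _ hax _ _ h => hax (hc h.1)⟩

lemma IsStarColoring.comp_embedding {G : SimpleGraph α} {G' : SimpleGraph β} (f : G ↪g G')
    {c : β → ℕ} (hc : IsStarColoring G' c) : IsStarColoring G (c ∘ f) :=
  ⟨fun _ _ h => hc.1 (f.map_adj_iff.2 h), fun a b x y hab hbx hxy hax hby hay =>
    hc.2 (f a) (f b) (f x) (f y) (f.map_adj_iff.2 hab) (f.map_adj_iff.2 hbx)
      (f.map_adj_iff.2 hxy) (f.injective.ne hax) (f.injective.ne hby) (f.injective.ne hay)⟩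

variable [Fintype α] {G : SimpleGraph α}

lemma StarRecolorStep.exists_colorsUsed_subset_erase {c' c : α → ℕ}
    (h : StarRecolorStep G c' c) : ∃ i ∈ colorsUsed c, colorsUsed c' ⊆ (colorsUsed c).erase i := by
  obtain ⟨-, -, i, hi, hkeep, hmove⟩ := h
  refine ⟨i, hi, fun n hn => ?_⟩
  obtain ⟨v, rfl⟩ := mem_colorsUsed.1 hn
  by_cases hv : c v = i
  · exact Finset.mem_erase.2 (hmove v hv)
  · rw [hkeep v hv]
    exact Finset.mem_erase.2 ⟨hv, mem_colorsUsed.2 ⟨v, rfl⟩⟩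

lemma StarRecolorStep.colorsUsed_subset {c' c : α → ℕ} (h : StarRecolorStep G c' c) :
    colorsUsed c' ⊆ colorsUsed c :=
  let ⟨_, _, hsub⟩ := h.exists_colorsUsed_subset_erase
  hsub.trans (Finset.erase_subset _ _)

lemma StarRecolorStep.card_colorsUsed_lt {c' c : α → ℕ} (h : StarRecolorStep G c' c) :
    (colorsUsed c').card < (colorsUsed c).card :=
  let ⟨_, hi, hsub⟩ := h.exists_colorsUsed_subset_erase
  (Finset.card_le_card hsub).trans_lt (Finset.card_erase_lt_of_mem hi)

/-- A star coloring with the fewest colors admits no recoloring step. -/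
lemma exists_isStarBColoring (G : SimpleGraph α) : ∃ c, IsStarBColoring G c := by
  obtain ⟨c, hc, hmin⟩ := (measure fun c : α → ℕ => (colorsUsed c).card).wf.has_min
    {c | IsStarColoring G c}
    ⟨_, isStarColoring_of_injective (Fin.val_injective.comp (Fintype.equivFin α).injective)⟩
  exact ⟨c, hc, fun c' h => hmin c' h.2.1 h.card_colorsUsed_lt⟩

lemma bddAbove_card_colorsUsed_isStarBColoring (G : SimpleGraph α) :
    BddAbove {n | ∃ c, IsStarBColoring G c ∧ (colorsUsed c).card = n} :=
  ⟨Fintype.card α, by rintro _ ⟨c, -, rfl⟩; exact card_colorsUsed_le c⟩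

lemma card_colorsUsed_le_starBChromaticNumber {c : α → ℕ} (hc : IsStarBColoring G c) :
    (colorsUsed c).card ≤ starBChromaticNumber G :=
  le_csSup (bddAbove_card_colorsUsed_isStarBColoring G) ⟨c, hc, rfl⟩

lemma starBChromaticNumber_le {n : ℕ}
    (h : ∀ c, IsStarBColoring G c → (colorsUsed c).card ≤ n) : starBChromaticNumber G ≤ n := by
  obtain ⟨c, hc⟩ := exists_isStarBColoring G
  exact csSup_le ⟨_, c, hc, rfl⟩ (by rintro _ ⟨c, hc, rfl⟩; exact h c hc)

lemma exists_isStarBColoring_card_eq (G : SimpleGraph α) :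
    ∃ c, IsStarBColoring G c ∧ (colorsUsed c).card = starBChromaticNumber G := by
  obtain ⟨c, hc⟩ := exists_isStarBColoring G
  exact Nat.sSup_mem (s := {n | ∃ c, IsStarBColoring G c ∧ (colorsUsed c).card = n})
    ⟨_, c, hc, rfl⟩ (bddAbove_card_colorsUsed_isStarBColoring G)

end StarColoring

section NonComplete

variable {α : Type*} {G : SimpleGraph α}

lemma update_eq_update_of_injective [DecidableEq α] {c : α → ℕ} (hc : Injective c)
    {x y p q : α} (hpq : p ≠ q) (h : update c x (c y) p = update c x (c y) q) :
    p = x ∧ q = y ∨ p = y ∧ q = x := by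
  rcases eq_or_ne p x with rfl | hp
  · rw [update_self, update_of_ne hpq.symm] at h
    exact .inl ⟨rfl, (hc h).symm⟩
  rcases eq_or_ne q x with rfl | hq
  · rw [update_self, update_of_ne hp] at h
    exact .inr ⟨hc h, rfl⟩
  rw [update_of_ne hp, update_of_ne hq] at h
  exact absurd (hc h) hpq

lemma isStarColoring_update_of_injective [DecidableEq α] {c : α → ℕ} (hc : Injective c)
    {x y : α} (hxy : ¬ G.Adj x y) : IsStarColoring G (update c x (c y)) := by
  have hpair := fun p q (hpq : p ≠ q) h =>
    update_eq_update_of_injective hc (x := x) (y := y) hpq h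
  refine ⟨fun u w huw h => ?_, fun a b u w hab _ _ hau hbw _ ⟨h₁, h₂⟩ => ?_⟩
  · rcases hpair u w (G.ne_of_adj huw) h with ⟨rfl, rfl⟩ | ⟨rfl, rfl⟩
    exacts [hxy huw, hxy huw.symm]
  · rcases hpair a u hau h₁ with ⟨rfl, -⟩ | ⟨rfl, -⟩ <;>
      rcases hpair b w hbw h₂ with ⟨rfl, -⟩ | ⟨rfl, -⟩ <;>
      first | exact G.irrefl hab | exact hxy hab | exact hxy hab.symm

lemma exists_starRecolorStep_of_injective [Fintype α] (hG : G ≠ ⊤) {c : α → ℕ}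
    (hc : Injective c) : ∃ c', StarRecolorStep G c' c := by
  classical
  obtain ⟨x, y, hne, hxy⟩ := SimpleGraph.ne_top_iff_exists_not_adj.1 hG
  refine ⟨update c x (c y), isStarColoring_of_injective hc,
    isStarColoring_update_of_injective hc hxy, c x, mem_colorsUsed.2 ⟨x, rfl⟩,
    fun v hv => update_of_ne (ne_of_apply_ne c hv) _ _, fun v hv => ?_⟩
  obtain rfl := hc hv
  rw [update_self]
  exact ⟨hc.ne hne.symm, mem_colorsUsed.2 ⟨y, rfl⟩⟩

lemma IsStarBColoring.not_injective [Fintype α] (hG : G ≠ ⊤) {c : α → ℕ}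
    (hc : IsStarBColoring G c) : ¬ Injective c := fun hinj =>
  let ⟨c', h⟩ := exists_starRecolorStep_of_injective hG hinj
  hc.2 c' h

end NonComplete

section Iso

variable {α β : Type*} [Fintype α] [Fintype β] {G : SimpleGraph α} {G' : SimpleGraph β}

lemma StarRecolorStep.comp_iso (e : G ≃g G') {c' c : β → ℕ} (h : StarRecolorStep G' c' c) :
    StarRecolorStep G (c' ∘ e) (c ∘ e) := by
  obtain ⟨hc, hc', i, hi, hkeep, hmove⟩ := h
  rw [← colorsUsed_comp_of_surjective e.surjective] at hi hmove
  exact ⟨hc.comp_embedding e.toEmbedding, hc'.comp_embedding e.toEmbedding, i, hi,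
    fun v => hkeep (e v), fun v => hmove (e v)⟩

lemma IsStarBColoring.comp_iso (e : G ≃g G') {c : β → ℕ} (hc : IsStarBColoring G' c) :
    IsStarBColoring G (c ∘ e) := by
  refine ⟨hc.1.comp_embedding e.toEmbedding, fun d hd => hc.2 (d ∘ e.symm) ?_⟩
  simpa [comp_assoc] using hd.comp_iso e.symm

lemma starBChromaticNumber_le_of_iso (e : G ≃g G') :
    starBChromaticNumber G' ≤ starBChromaticNumber G :=
  starBChromaticNumber_le fun c hc =>
    colorsUsed_comp_of_surjective e.surjective c ▸
      card_colorsUsed_le_starBChromaticNumber (hc.comp_iso e)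

lemma SimpleGraph.Iso.starBChromaticNumber_eq (e : G ≃g G') :
    starBChromaticNumber G = starBChromaticNumber G' :=
  (starBChromaticNumber_le_of_iso e.symm).antisymm (starBChromaticNumber_le_of_iso e)

end Iso

section Join

variable {α β : Type*} {G : SimpleGraph α} {H : SimpleGraph β}

@[simp] lemma graphJoin_adj_inl_inl {a a' : α} :
    (graphJoin G H).Adj (inl a) (inl a') ↔ G.Adj a a' := by
  simp [graphJoin]

@[simp] lemma graphJoin_adj_inr_inr {b b' : β} :
    (graphJoin G H).Adj (inr b) (inr b') ↔ H.Adj b b' := by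
  simp [graphJoin]

@[simp] lemma graphJoin_adj_inl_inr {a : α} {b : β} : (graphJoin G H).Adj (inl a) (inr b) := by
  simp [graphJoin]

@[simp] lemma graphJoin_adj_inr_inl {a : α} {b : β} : (graphJoin G H).Adj (inr b) (inl a) := by
  simp [graphJoin]

variable (G H) in
def graphJoinInl : G ↪g graphJoin G H := ⟨Embedding.inl, graphJoin_adj_inl_inl⟩

variable (G H) in
def graphJoinInr : H ↪g graphJoin G H := ⟨Embedding.inr, graphJoin_adj_inr_inr⟩

variable (G H) in
def graphJoinComm : graphJoin G H ≃g graphJoin H G where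
  toEquiv := Equiv.sumComm α β
  map_rel_iff' := by rintro (a | b) (a' | b') <;> simp

lemma isStarColoring_graphJoin_iff {c : α ⊕ β → ℕ} :
    IsStarColoring (graphJoin G H) c ↔
      IsStarColoring G (c ∘ inl) ∧ IsStarColoring H (c ∘ inr) ∧
      (∀ a b, c (inl a) ≠ c (inr b)) ∧ (Injective (c ∘ inl) ∨ Injective (c ∘ inr)) := by
  constructor
  · intro hc
    refine ⟨hc.comp_embedding (graphJoinInl G H), hc.comp_embedding (graphJoinInr G H),
      fun a b => hc.1 graphJoin_adj_inl_inr, ?_⟩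
    by_contra! hrep
    obtain ⟨a, a', ha, ha'⟩ := not_injective_iff.1 hrep.1
    obtain ⟨b, b', hb, hb'⟩ := not_injective_iff.1 hrep.2
    exact hc.2 (inl a) (inr b) (inl a') (inr b') graphJoin_adj_inl_inr graphJoin_adj_inr_inl
      graphJoin_adj_inl_inr (by simpa) (by simpa) (by simp) ⟨ha, hb⟩
  · rintro ⟨hG, hH, hd, hinj⟩
    refine ⟨?_, ?_⟩
    · rintro (a | b) (a' | b') h
      · exact hG.1 (graphJoin_adj_inl_inl.1 h)
      · exact hd a b'
      · exact (hd a' b).symm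
      · exact hH.1 (graphJoin_adj_inr_inr.1 h)
    -- a bicolored `P₄` stays on one side, or alternates between two repeated colors
    · rintro (a | a) (b | b) (x | x) (y | y) hab hbx hxy hax hby hay ⟨h₁, h₂⟩ <;>
        simp only [graphJoin_adj_inl_inl, graphJoin_adj_inr_inr, ne_eq, inl.injEq,
          inr.injEq] at hab hbx hxy hax hby hay <;>
        first
        | exact hd _ _ h₁ | exact hd _ _ h₂ | exact hd _ _ h₁.symm | exact hd _ _ h₂.symm
        | skip
      · exact hG.2 a b x y hab hbx hxy hax hby hay ⟨h₁, h₂⟩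
      · exact hinj.elim (fun h => hax (h h₁)) (fun h => hby (h h₂))
      · exact hinj.elim (fun h => hby (h h₂)) (fun h => hax (h h₁))
      · exact hH.2 a b x y hab hbx hxy hax hby hay ⟨h₁, h₂⟩

end Join

section UpperBound

variable {α β : Type*} [Fintype α] [Fintype β] {G : SimpleGraph α} {H : SimpleGraph β}

lemma card_colorsUsed_sum {c : α ⊕ β → ℕ} (hd : ∀ a b, c (inl a) ≠ c (inr b)) :
    (colorsUsed c).card = (colorsUsed (c ∘ inl)).card + (colorsUsed (c ∘ inr)).card := by
  have hunion : colorsUsed c = colorsUsed (c ∘ inl) ∪ colorsUsed (c ∘ inr) := by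
    ext n
    simp [mem_colorsUsed, Sum.exists]
  rw [hunion, Finset.card_union_of_disjoint]
  rw [Finset.disjoint_left]
  rintro _ ha hb
  obtain ⟨a, rfl⟩ := mem_colorsUsed.1 ha
  obtain ⟨b, hb⟩ := mem_colorsUsed.1 hb
  exact hd a b hb.symm

lemma IsStarBColoring.comp_inl {c : α ⊕ β → ℕ} (hc : IsStarBColoring (graphJoin G H) c)
    (hinj : Injective (c ∘ inr)) : IsStarBColoring G (c ∘ inl) := by
  obtain ⟨hG, hH, hdisj, -⟩ := isStarColoring_graphJoin_iff.1 hc.1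
  refine ⟨hG, fun d hstep => hc.2 (Sum.elim d (c ∘ inr)) ?_⟩
  have hsub := hstep.colorsUsed_subset
  have hsub' := colorsUsed_comp_subset inl c
  obtain ⟨-, hdstar, i, hi, hkeep, hmove⟩ := hstep
  refine ⟨hc.1, isStarColoring_graphJoin_iff.2 ⟨hdstar, hH, fun a b h => ?_, .inr hinj⟩, i,
    hsub' hi, ?_, ?_⟩
  · obtain ⟨a', ha'⟩ := mem_colorsUsed.1 (hsub (mem_colorsUsed.2 ⟨a, rfl⟩))
    exact hdisj a' b (ha'.trans h)
  · rintro (a | b) hv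
    exacts [hkeep a hv, rfl]
  · rintro (a | b) hv
    · exact (hmove a hv).imp_right (@hsub' _)
    · obtain ⟨a, rfl⟩ := mem_colorsUsed.1 hi
      exact absurd hv.symm (hdisj a b)

lemma card_colorsUsed_le_of_injective_inr {c : α ⊕ β → ℕ}
    (hc : IsStarBColoring (graphJoin G H) c) (hinj : Injective (c ∘ inr)) :
    (colorsUsed c).card ≤ starBChromaticNumber G + Fintype.card β := by
  rw [card_colorsUsed_sum (isStarColoring_graphJoin_iff.1 hc.1).2.2.1,
    card_colorsUsed_of_injective hinj]
  exact Nat.add_le_add_right (card_colorsUsed_le_starBChromaticNumber (hc.comp_inl hinj)) _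

variable (G H) in
lemma starBChromaticNumber_graphJoin_le :
    starBChromaticNumber (graphJoin G H) ≤
      max (starBChromaticNumber G + Fintype.card β) (starBChromaticNumber H + Fintype.card α) := by
  refine starBChromaticNumber_le fun c hc => ?_
  rcases (isStarColoring_graphJoin_iff.1 hc.1).2.2.2 with hinl | hinr
  · have := card_colorsUsed_le_of_injective_inr (hc.comp_iso (graphJoinComm H G)) hinl
    rw [colorsUsed_comp_of_surjective (graphJoinComm H G).surjective] at this
    exact le_max_of_le_right this
  · exact le_max_of_le_left (card_colorsUsed_le_of_injective_inr hc hinr)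

end UpperBound

section LowerBound

variable {α β : Type*} [Fintype α] [Fintype β] {G : SimpleGraph α}

lemma exists_injective_forall_notMem (s : Finset ℕ) (β : Type*) [Fintype β] :
    ∃ e : β → ℕ, Injective e ∧ ∀ b, e b ∉ s := by
  refine ⟨fun b => s.sup id + 1 + Fintype.equivFin β b, fun b b' h => ?_, fun b hb => ?_⟩
  · exact (Fintype.equivFin β).injective (Fin.val_injective (Nat.add_left_cancel h))
  · have := Finset.le_sup (f := id) hb
    simp only [id] at this
    omega

lemma IsStarBColoring.sumElim {cG : α → ℕ} (hc : IsStarBColoring G cG) (hrep : ¬ Injective cG)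
    (H : SimpleGraph β) {e : β → ℕ} (he : Injective e) (hdisj : ∀ a b, cG a ≠ e b) :
    IsStarBColoring (graphJoin G H) (Sum.elim cG e) := by
  refine ⟨isStarColoring_graphJoin_iff.2 ⟨hc.1, isStarColoring_of_injective he, hdisj, .inr he⟩,
    fun c' hstep => ?_⟩
  obtain ⟨-, hc', i, hi, hkeep, hmove⟩ := hstep
  obtain ⟨hG', -, hdisj', hinj'⟩ := isStarColoring_graphJoin_iff.1 hc'
  obtain ⟨v₀ | b₀, rfl⟩ := mem_colorsUsed.1 hi
  · refine hc.2 (c' ∘ inl) ⟨hc.1, hG', cG v₀, mem_colorsUsed.2 ⟨v₀, rfl⟩,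
      fun a ha => hkeep (inl a) ha, fun a ha => ⟨(hmove (inl a) ha).1, ?_⟩⟩
    obtain ⟨a' | b, hv⟩ := mem_colorsUsed.1 (hmove (inl a) ha).2
    · exact mem_colorsUsed.2 ⟨a', hv⟩
    · exact absurd ((hkeep (inr b) (hdisj v₀ b).symm).trans hv) (hdisj' a b).symm
  · obtain ⟨hne, hv⟩ := hmove (inr b₀) rfl
    obtain ⟨v, hv⟩ := mem_colorsUsed.1 hv
    have hkept : c' v = Sum.elim cG e v := hkeep v (hv ▸ hne)
    rcases v with a | b
    · exact hdisj' a b₀ (hkept.trans hv)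
    have hinl : c' ∘ inl = cG := funext fun a => hkeep (inl a) (hdisj a b₀)
    rcases hinj' with h | h
    · exact hrep (hinl ▸ h)
    · obtain rfl : b = b₀ := h (hkept.trans hv)
      exact hne hv.symm

lemma starBChromaticNumber_add_card_le_graphJoin (hG : G ≠ ⊤) (H : SimpleGraph β) :
    starBChromaticNumber G + Fintype.card β ≤ starBChromaticNumber (graphJoin G H) := by
  obtain ⟨cG, hcG, hcard⟩ := exists_isStarBColoring_card_eq G
  obtain ⟨e, he, hfresh⟩ := exists_injective_forall_notMem (colorsUsed cG) β
  have hdisj : ∀ a b, cG a ≠ e b := fun a b h => hfresh b (h ▸ mem_colorsUsed.2 ⟨a, rfl⟩)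
  calc starBChromaticNumber G + Fintype.card β
      = (colorsUsed (Sum.elim cG e)).card := by
        rw [card_colorsUsed_sum (c := Sum.elim cG e) hdisj, elim_comp_inl, elim_comp_inr, hcard,
          card_colorsUsed_of_injective he]
    _ ≤ starBChromaticNumber (graphJoin G H) := card_colorsUsed_le_starBChromaticNumber
        (hcG.sumElim (hcG.not_injective hG) H he hdisj)

end LowerBound

/-- **Theorem (star b-chromatic number of joins).** For finite simple graphs `G` and `H`,
neither of which is complete,
`Sᵦ(G ∨ H) = max (Sᵦ(G) + n_H) (Sᵦ(H) + n_G)`. -/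
theorem starBChromaticNumber_join {α β : Type*} [Fintype α] [Fintype β]
    (G : SimpleGraph α) (H : SimpleGraph β) (hG : G ≠ ⊤) (hH : H ≠ ⊤) :
    starBChromaticNumber (graphJoin G H) =
      max (starBChromaticNumber G + Fintype.card β)
          (starBChromaticNumber H + Fintype.card α) := by
  refine (starBChromaticNumber_graphJoin_le G H).antisymm (max_le ?_ ?_)
  · exact starBChromaticNumber_add_card_le_graphJoin hG H
  · rw [(graphJoinComm G H).starBChromaticNumber_eq]
    exact starBChromaticNumber_add_card_le_graphJoin hH G
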